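/- Let X_1,…,X_T, Y_1,…,Y_T, U_1,…,U_T be finite-valued random processes on a common probability space. For each t ∈ {1,…,T} and each realization (y^{t−1}, u^{t−1}) with positive probability, let the instantaneous privacy loss at stage t be the privacy leakage L(ℓ_log, P_{X^t, Y_t | y^{t−1}, u^{t−1}}) of the private variable X^t due to disclosing Y_t, computed under the conditional distribution given (Y^{t−1},U^{t−1}) = (y^{t−1},u^{t−1}) with the logarithmic loss ℓ_log(x,Q) = log(1/Q(x)). Then the expected total privacy loss, Σ_{t=1}^T E_{P_{Y^{t−1},U^{t−1}}}[ L(ℓ_log, P_{X^t, Y_t | y^{t−1}, u^{t−1}}) ], equals Kramer's causally conditioned directed information I(X^T→Y^T‖U^{T−1}) = Σ_{t=1}^T I(X^t; Y_t | Y^{t−1}, U^{t−1}). -/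
import Mathlib


/-- The distribution of a random variable `X` on a finite probability space
with weights `p`. -/
noncomputable def distOf {Ω α : Type} [Fintype Ω] [DecidableEq α]
    (p : Ω → ℝ) (X : Ω → α) : α → ℝ :=
  fun a => ∑ ω : Ω, if X ω = a then p ω else 0

/-- Shannon entropy `H(X) = -∑ₓ P(X=x) log P(X=x)`. -/
noncomputable def entropy {Ω α : Type} [Fintype Ω] [Fintype α] [DecidableEq α]
    (p : Ω → ℝ) (X : Ω → α) : ℝ :=
  ∑ a : α, Real.negMulLog (distOf p X a)

/-- The conditional probability weights given the event `Z = z`. -/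
noncomputable def condProb {Ω γ : Type} [Fintype Ω] [DecidableEq γ]
    (p : Ω → ℝ) (Z : Ω → γ) (z : γ) : Ω → ℝ :=
  fun ω => if Z ω = z then p ω / distOf p Z z else 0

/-- Conditional entropy `H(X|Z) = ∑_z P(Z=z) H(X|Z=z)`. -/
noncomputable def condEntropy {Ω α γ : Type} [Fintype Ω] [Fintype α] [Fintype γ]
    [DecidableEq α] [DecidableEq γ] (p : Ω → ℝ) (X : Ω → α) (Z : Ω → γ) : ℝ :=
  ∑ z : γ, distOf p Z z * entropy (condProb p Z z) X

/-- Mutual information `I(X;Y) = H(X) - H(X|Y)`. -/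
noncomputable def mutualInfo {Ω α β : Type} [Fintype Ω] [Fintype α] [Fintype β]
    [DecidableEq α] [DecidableEq β] (p : Ω → ℝ) (X : Ω → α) (Y : Ω → β) : ℝ :=
  entropy p X - condEntropy p X Y

/-- Conditional mutual information `I(X;Y|Z) = ∑_z P(Z=z) I(X;Y|Z=z)`. -/
noncomputable def condMutualInfo {Ω α β γ : Type} [Fintype Ω] [Fintype α] [Fintype β]
    [Fintype γ] [DecidableEq α] [DecidableEq β] [DecidableEq γ]
    (p : Ω → ℝ) (X : Ω → α) (Y : Ω → β) (Z : Ω → γ) : ℝ :=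
  ∑ z : γ, distOf p Z z * mutualInfo (condProb p Z z) X Y

/-- Conditional independence of `A` and `B` given `C`:
`P(A=a,B=b,C=c) P(C=c) = P(A=a,C=c) P(B=b,C=c)` for all `a, b, c`. -/
def CondIndep {Ω α β γ : Type} [Fintype Ω] [DecidableEq α] [DecidableEq β] [DecidableEq γ]
    (p : Ω → ℝ) (A : Ω → α) (B : Ω → β) (C : Ω → γ) : Prop :=
  ∀ (a : α) (b : β) (c : γ),
    distOf p (fun ω => (A ω, B ω, C ω)) (a, b, c) * distOf p C c =
      distOf p (fun ω => (A ω, C ω)) (a, c) * distOf p (fun ω => (B ω, C ω)) (b, c)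

/-- The block `X^t = (X_1, …, X_t)` of a process (0-based: the first `t` entries). -/
def prefixRV {Ω 𝒳 : Type} (X : ℕ → Ω → 𝒳) (t : ℕ) : Ω → (Fin t → 𝒳) :=
  fun ω i => X i ω

/-- `𝒫(𝒳)`: the probability distributions on a finite set `𝒳`. -/
def ProbVec (𝒳 : Type) [Fintype 𝒳] : Type :=
  {Q : 𝒳 → ℝ // (∀ x, 0 ≤ Q x) ∧ ∑ x, Q x = 1}

open Classical in
/-- The logarithmic loss `ℓ_log(x, Q) = log(1/Q(x))`, valued in `ℝ ∪ {+∞}`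
(it is `+∞` when `Q(x) = 0`). -/
noncomputable def llog {𝒳 : Type} (Q : 𝒳 → ℝ) (x : 𝒳) : EReal :=
  if Q x = 0 then ⊤ else ((Real.log (1 / Q x) : ℝ) : EReal)

/-- The expected logarithmic loss `E_μ[ℓ_log(X, Q)]` of an assumed distribution `Q`
under a distribution `μ` on a finite set `𝒳`. -/
noncomputable def expLogLoss {𝒳 : Type} [Fintype 𝒳] (μ : 𝒳 → ℝ) (Q : 𝒳 → ℝ) : EReal :=
  ∑ x, ((μ x : ℝ) : EReal) * llog Q x

/-- The privacy leakage function under the logarithmic loss, for private random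
variable `A` and disclosed random variable `B` on a probability space with weights `q`:
`L(ℓ_log, P_{A,B}) = inf_Q E_{P_A}[ℓ_log(A,Q)] − ∑_b P_B(b) inf_Q E_{P_{A|B=b}}[ℓ_log(A,Q)]`. -/
noncomputable def leakLog {Ω α β : Type} [Fintype Ω] [Fintype α] [Fintype β]
    [DecidableEq α] [DecidableEq β] (q : Ω → ℝ) (A : Ω → α) (B : Ω → β) : EReal :=
  (⨅ Q : ProbVec α, expLogLoss (distOf q A) Q.1) -
    ∑ b : β, ((distOf q B b : ℝ) : EReal) *
      ⨅ Q : ProbVec α, expLogLoss (distOf (condProb q B b) A) Q.1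

noncomputable def cEReal : ℝ →+ EReal := ⟨⟨(fun x => (x:EReal)), EReal.coe_zero⟩, EReal.coe_add⟩

lemma EReal_coe_sum {ι : Type} (s : Finset ι) (f : ι → ℝ) :
    ((∑ i ∈ s, f i : ℝ) : EReal) = ∑ i ∈ s, ((f i : ℝ) : EReal) := map_sum cEReal f s

lemma distOf_nonneg {Ω α : Type} [Fintype Ω] [DecidableEq α]
    {p : Ω → ℝ} (hp : ∀ ω, 0 ≤ p ω) (X : Ω → α) (a : α) : 0 ≤ distOf p X a :=
  Finset.sum_nonneg fun ω _ => by split <;> [exact hp ω; exact le_rfl]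

lemma sum_distOf {Ω α : Type} [Fintype Ω] [Fintype α] [DecidableEq α]
    (p : Ω → ℝ) (X : Ω → α) : ∑ a : α, distOf p X a = ∑ ω, p ω := by
  unfold distOf
  rw [Finset.sum_comm]
  simp

/-- uniform distribution shows ProbVec is nonempty -/
instance ProbVec.instNonempty {α : Type} [Fintype α] [Nonempty α] : Nonempty (ProbVec α) := by
  refine ⟨⟨fun _ => (Fintype.card α : ℝ)⁻¹, fun x => by positivity, ?_⟩⟩
  have h : (0:ℝ) < Fintype.card α := by
    exact_mod_cast Fintype.card_pos
  rw [Finset.sum_const, Finset.card_univ, nsmul_eq_mul, mul_inv_cancel₀ (ne_of_gt h)]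

lemma expLogLoss_zero {α : Type} [Fintype α] {μ : α → ℝ} (h : ∀ x, μ x = 0) (Q : α → ℝ) :
    expLogLoss μ Q = 0 := by
  unfold expLogLoss
  rw [Finset.sum_eq_zero]
  intro x _
  rw [h x]
  simp

/-- Gibbs' inequality, real version. -/
lemma gibbs {α : Type} [Fintype α] {μ Q : α → ℝ} (h0 : ∀ x, 0 ≤ μ x) (h1 : ∑ x, μ x = 1)
    (hQ0 : ∀ x, 0 ≤ Q x) (hQ1 : ∑ x, Q x = 1) (hsupp : ∀ x, μ x ≠ 0 → Q x ≠ 0) :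
    ∑ x, Real.negMulLog (μ x) ≤ ∑ x, μ x * Real.log (1 / Q x) := by
  have key : ∀ x, μ x - Q x ≤ μ x * Real.log (1 / Q x) - Real.negMulLog (μ x) := by
    intro x
    rcases eq_or_lt_of_le (h0 x) with h | h
    · simp [← h, Real.negMulLog, hQ0 x]
    · have hq : 0 < Q x := lt_of_le_of_ne (hQ0 x) (Ne.symm (hsupp x (ne_of_gt h)))
      have hlog : Real.log (Q x / μ x) ≤ Q x / μ x - 1 :=
        Real.log_le_sub_one_of_pos (by positivity)
      have : 1 - Q x / μ x ≤ Real.log (μ x / Q x) := by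
        rw [Real.log_div (ne_of_gt h) (ne_of_gt hq)]
        rw [Real.log_div (ne_of_gt hq) (ne_of_gt h)] at hlog
        linarith
      have h2 := mul_le_mul_of_nonneg_left this (le_of_lt h)
      rw [mul_sub, mul_one, mul_div_cancel₀ _ (ne_of_gt h)] at h2
      calc μ x - Q x ≤ μ x * Real.log (μ x / Q x) := h2
        _ = μ x * Real.log (1 / Q x) - Real.negMulLog (μ x) := by
            rw [Real.negMulLog, Real.log_div one_ne_zero (ne_of_gt hq),
              Real.log_div (ne_of_gt h) (ne_of_gt hq), Real.log_one]
            ring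
  have hsum := Finset.sum_le_sum (fun x (_ : x ∈ Finset.univ) => key x)
  rw [Finset.sum_sub_distrib, Finset.sum_sub_distrib, h1, hQ1] at hsum
  linarith

lemma llog_nonneg {α : Type} [Fintype α] {Q : α → ℝ} (hQ0 : ∀ x, 0 ≤ Q x)
    (hQ1 : ∑ x, Q x = 1) (x : α) : 0 ≤ llog Q x := by
  unfold llog
  split
  · exact le_top
  · have hx : 0 < Q x := lt_of_le_of_ne (hQ0 x) (Ne.symm ‹_›)
    have hle : Q x ≤ 1 := by
      rw [← hQ1]
      exact Finset.single_le_sum (fun i _ => hQ0 i) (Finset.mem_univ x)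
    have : (0:ℝ) ≤ Real.log (1 / Q x) := by
      rw [Real.log_div one_ne_zero (ne_of_gt hx), Real.log_one]
      simp [Real.log_nonpos (le_of_lt hx) hle]
    exact_mod_cast this

/-- The infimum of expected log loss is the entropy. -/
lemma iInf_expLogLoss {α : Type} [Fintype α] [Nonempty α] {μ : α → ℝ}
    (h0 : ∀ x, 0 ≤ μ x) (h1 : ∑ x, μ x = 1) :
    (⨅ Q : ProbVec α, expLogLoss μ Q.1) = ((∑ x, Real.negMulLog (μ x) : ℝ) : EReal) := by
  apply le_antisymm
  · -- take Q = μ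
    refine le_trans (iInf_le _ ⟨μ, h0, h1⟩) (le_of_eq ?_)
    unfold expLogLoss
    rw [EReal_coe_sum]
    apply Finset.sum_congr rfl
    intro x _
    unfold llog
    by_cases hx : μ x = 0
    · simp [hx, Real.negMulLog]
    · rw [if_neg hx, ← EReal.coe_mul]
      congr 1
      rw [Real.negMulLog, Real.log_div one_ne_zero hx, Real.log_one]
      ring
  · apply le_iInf
    rintro ⟨Q, hQ0, hQ1⟩
    by_cases hbad : ∃ x, μ x ≠ 0 ∧ Q x = 0
    · -- expLogLoss is ⊤
      obtain ⟨x₀, hμx, hQx⟩ := hbad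
      have htop : expLogLoss μ Q = ⊤ := by
        rw [← top_le_iff]
        unfold expLogLoss
        have h1' : ((μ x₀ : ℝ) : EReal) * llog Q x₀ = ⊤ := by
          unfold llog
          rw [if_pos hQx]
          have : (0:EReal) < ((μ x₀ : ℝ) : EReal) := by
            exact_mod_cast lt_of_le_of_ne (h0 x₀) (Ne.symm hμx)
          exact EReal.mul_top_of_pos this
        calc (⊤ : EReal) = ((μ x₀ : ℝ) : EReal) * llog Q x₀ := h1'.symm
          _ ≤ ∑ x, ((μ x : ℝ) : EReal) * llog Q x := by
              apply Finset.single_le_sum (f := fun x => ((μ x : ℝ) : EReal) * llog Q x)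
                (fun i _ => ?_) (Finset.mem_univ x₀)
              exact mul_nonneg (by exact_mod_cast h0 i) (llog_nonneg hQ0 hQ1 i)
      rw [htop]; exact le_top
    · push_neg at hbad
      have heq : expLogLoss μ Q = ((∑ x, μ x * Real.log (1 / Q x) : ℝ) : EReal) := by
        unfold expLogLoss
        rw [EReal_coe_sum]
        apply Finset.sum_congr rfl
        intro x _
        by_cases hx : μ x = 0
        · simp [hx]
        · unfold llog
          rw [if_neg (hbad x hx), ← EReal.coe_mul]
      rw [heq]
      exact_mod_cast gibbs h0 h1 hQ0 hQ1 hbad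

lemma condProb_nonneg {Ω γ : Type} [Fintype Ω] [DecidableEq γ]
    {p : Ω → ℝ} (hp : ∀ ω, 0 ≤ p ω) (Z : Ω → γ) (z : γ) (ω : Ω) :
    0 ≤ condProb p Z z ω := by
  unfold condProb
  split
  · exact div_nonneg (hp ω) (distOf_nonneg hp Z z)
  · exact le_rfl

lemma condProb_of_distOf_eq_zero {Ω γ : Type} [Fintype Ω] [DecidableEq γ]
    (p : Ω → ℝ) (Z : Ω → γ) (z : γ) (h : distOf p Z z = 0) :
    condProb p Z z = fun _ => 0 := by
  funext ω
  unfold condProb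
  rw [h]
  split <;> simp

lemma sum_condProb {Ω γ : Type} [Fintype Ω] [DecidableEq γ]
    (p : Ω → ℝ) (Z : Ω → γ) (z : γ) (h : distOf p Z z ≠ 0) :
    ∑ ω, condProb p Z z ω = 1 := by
  unfold condProb
  have he : ∀ ω, (if Z ω = z then p ω / distOf p Z z else 0) =
      (if Z ω = z then p ω else 0) / distOf p Z z := by
    intro ω; split <;> simp
  simp_rw [he]
  rw [← Finset.sum_div, div_eq_one_iff_eq h]
  rfl

lemma distOf_zero {Ω α : Type} [Fintype Ω] [DecidableEq α] (X : Ω → α) (a : α) :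
    distOf (fun _ => 0) X a = 0 := by
  unfold distOf; simp

/-- privacy leakage equals mutual information for a genuine distribution -/
lemma leakLog_eq_mutualInfo {Ω α β : Type} [Fintype Ω] [Fintype α] [Fintype β]
    [DecidableEq α] [DecidableEq β] [Nonempty α]
    {q : Ω → ℝ} (h0 : ∀ ω, 0 ≤ q ω) (h1 : ∑ ω, q ω = 1) (A : Ω → α) (B : Ω → β) :
    leakLog q A B = ((mutualInfo q A B : ℝ) : EReal) := by
  unfold leakLog mutualInfo
  have hfirst : (⨅ Q : ProbVec α, expLogLoss (distOf q A) Q.1) =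
      ((entropy q A : ℝ) : EReal) := by
    apply iInf_expLogLoss (distOf_nonneg h0 A)
    rw [sum_distOf, h1]
  have hsecond : ∀ b : β,
      ((distOf q B b : ℝ) : EReal) *
        (⨅ Q : ProbVec α, expLogLoss (distOf (condProb q B b) A) Q.1) =
      (((distOf q B b * entropy (condProb q B b) A : ℝ)) : EReal) := by
    intro b
    by_cases hd : distOf q B b = 0
    · rw [hd, condProb_of_distOf_eq_zero q B b hd]
      have : (⨅ Q : ProbVec α, expLogLoss (distOf (fun _ : Ω => (0:ℝ)) A) Q.1) = 0 := by
        have he : ∀ Q : ProbVec α, expLogLoss (distOf (fun _ : Ω => (0:ℝ)) A) Q.1 = 0 :=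
          fun Q => expLogLoss_zero (fun x => distOf_zero A x) Q.1
        simp [he]
      rw [this]
      simp
    · have hc0 : ∀ ω, 0 ≤ condProb q B b ω := condProb_nonneg h0 B b
      have hc1 : ∑ ω, condProb q B b ω = 1 := sum_condProb q B b hd
      have := iInf_expLogLoss (μ := distOf (condProb q B b) A)
        (distOf_nonneg hc0 A) (by rw [sum_distOf, hc1])
      rw [this, ← EReal.coe_mul]
      rfl
  rw [hfirst, Finset.sum_congr rfl (fun b _ => hsecond b), ← EReal_coe_sum, ← EReal.coe_sub]
  rfl

/-- The expected total privacy loss, i.e. the sum over stages `t` of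
the expectation over realizations `(y^{t-1}, u^{t-1})` of the privacy leakage
`L(ℓ_log, P_{X^t, Y_t | y^{t-1}, u^{t-1}})`, equals Kramer's causally conditioned
directed information `I(X^T → Y^T ‖ U^{T-1}) = ∑_t I(X^t; Y_t | Y^{t-1}, U^{t-1})`.
(0-based indexing: the paper's stage `t ∈ {1,…,T}` corresponds to index `t < T` here;
`X^t` is `prefixRV X (t+1)`, and `Y^{t-1}`, `U^{t-1}` are `prefixRV Y t`, `prefixRV U t`.) -/
theorem stmt2 {Ω 𝒳 𝒴 𝒰 : Type} [Fintype Ω] [Fintype 𝒳] [Fintype 𝒴] [Fintype 𝒰]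
    [DecidableEq 𝒳] [DecidableEq 𝒴] [DecidableEq 𝒰]
    (p : Ω → ℝ) (hp0 : ∀ ω, 0 ≤ p ω) (hp1 : ∑ ω, p ω = 1)
    (T : ℕ) (X : ℕ → Ω → 𝒳) (Y : ℕ → Ω → 𝒴) (U : ℕ → Ω → 𝒰) :
    ∑ t ∈ Finset.range T,
        ∑ w : (Fin t → 𝒴) × (Fin t → 𝒰),
          ((distOf p (fun ω => (prefixRV Y t ω, prefixRV U t ω)) w : ℝ) : EReal) *
            leakLog (condProb p (fun ω => (prefixRV Y t ω, prefixRV U t ω)) w)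
              (prefixRV X (t + 1)) (Y t) =
      ((∑ t ∈ Finset.range T,
          condMutualInfo p (prefixRV X (t + 1)) (Y t)
            (fun ω => (prefixRV Y t ω, prefixRV U t ω)) : ℝ) : EReal) := by
  
  haveI hΩ : Nonempty Ω := by
    rcases isEmpty_or_nonempty Ω with h | h
    · rw [Finset.univ_eq_empty, Finset.sum_empty] at hp1; norm_num at hp1
    · exact h
  haveI hX : Nonempty 𝒳 := ⟨X 0 (Classical.arbitrary Ω)⟩
  rw [EReal_coe_sum]
  apply Finset.sum_congr rfl
  intro t _
  unfold condMutualInfo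
  rw [EReal_coe_sum]
  apply Finset.sum_congr rfl
  intro w _
  set Z : Ω → (Fin t → 𝒴) × (Fin t → 𝒰) := fun ω => (prefixRV Y t ω, prefixRV U t ω) with hZ
  by_cases hd : distOf p Z w = 0
  · rw [hd]
    simp
  · have h0 := condProb_nonneg hp0 Z w
    have h1 := sum_condProb p Z w hd
    rw [leakLog_eq_mutualInfo h0 h1, ← EReal.coe_mul]
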